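/- Let I, J ⊆ k^× be two disjoint Z⋊Z/2-orbits, each avoiding ±1, let ν = ν₁ + ν₂ ∈ ᶿN(I ∪ J) with ν₁ ∈ ᶿNI and ν₂ ∈ ᶿNJ, and in the separated VV algebra 𝔚_ν set e = Σ e(ij), the sum over all i ∈ ᶿI^{ν₁} and j ∈ ᶿJ^{ν₂} of the idempotents indexed by the concatenated tuples. Then e is full in 𝔚_ν, i.e. 𝔚_ν e 𝔚_ν = 𝔚_ν. -/

import Mathlib

open scoped TensorProduct
open CategoryTheory

noncomputable section

namespace VVPaper

variable {k : Type} [Field k]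

/-! ## Quiver combinatorics -/

/-- There is an arrow `a → b` in the quiver `Γ` iff `a = p² b` (arrows `p² i → i`). -/
def Arrow (p a b : kˣ) : Prop := a = p ^ 2 * b

/-- The orbit of `lam` under the `ℤ ⋊ ℤ/2`-action `(n, ε) · λ = p^(2n) λ^ε` on `kˣ`. -/
def orbit (p lam : kˣ) : Set kˣ :=
  {x | ∃ n : ℤ, x = p ^ (2 * n) * lam ∨ x = p ^ (2 * n) * lam⁻¹}

/-- The half-orbit `I⁺ = {p^(2n) λ : n ∈ ℤ}`. -/
def halfOrbit (p lam : kˣ) : Set kˣ := {x | ∃ n : ℤ, x = p ^ (2 * n) * lam}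

/-- `ν ∈ ᶿℕI`: a finitely supported dimension vector, supported on `I` and `θ`-invariant
(`θ i = i⁻¹`). -/
def IsDimVec (I : Set kˣ) (ν : kˣ →₀ ℕ) : Prop :=
  (∀ a : kˣ, ν a ≠ 0 → a ∈ I) ∧ (∀ a : kˣ, ν a⁻¹ = ν a)

/-- The height `|ν|` of a dimension vector. -/
def height (ν : kˣ →₀ ℕ) : ℕ := ν.sum fun _ n => n

/-- `i = (i₁, …, i_m) ∈ ᶿI^ν`, i.e. `Σ i_k + Σ i_k⁻¹ = ν`. -/
def IsThetaSeq (ν : kˣ →₀ ℕ) {m : ℕ} (i : Fin m → kˣ) : Prop :=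
  (∑ j : Fin m, (Finsupp.single (i j) 1 + Finsupp.single (i j)⁻¹ 1)) = ν

/-- `i = (i₁, …, i_m) ∈ I^ν̃`, i.e. `Σ i_k = ν̃` (for KLR algebras). -/
def IsSeq (ν : kˣ →₀ ℕ) {m : ℕ} (i : Fin m → kˣ) : Prop :=
  (∑ j : Fin m, Finsupp.single (i j) 1) = ν

open Classical in
/-- The (finite) set of all sequences in `ᶿI^ν`. -/
def thetaSeqs (ν : kˣ →₀ ℕ) (m : ℕ) : Finset (Fin m → kˣ) :=
  (Fintype.piFinset fun _ : Fin m => ν.support).filter fun i => IsThetaSeq ν i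

open Classical in
/-- The (finite) set of all sequences in `I^ν̃`. -/
def seqs (ν : kˣ →₀ ℕ) (m : ℕ) : Finset (Fin m → kˣ) :=
  (Fintype.piFinset fun _ : Fin m => ν.support).filter fun i => IsSeq ν i

/-! ## Generators and relations for VV and KLR algebras -/

/-- Generators of a VV algebra (or of a KLR algebra, discarding `pi`):
polynomial generators `x`, intertwiners `sig`, idempotents `idem` and the extra generator `pi`. -/
inductive Gen (V : Type) (m : ℕ) : Type
  | x : Fin m → Gen V m
  | sig : Fin (m - 1) → Gen V m
  | idem : (Fin m → V) → Gen V m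
  | pi : Gen V m

/-- The free algebra on the generators. -/
abbrev FA (k : Type) [Field k] (m : ℕ) : Type := FreeAlgebra k (Gen kˣ m)

def X {m : ℕ} (j : Fin m) : FA k m := FreeAlgebra.ι k (Gen.x j)
def Sg {m : ℕ} (s : Fin (m - 1)) : FA k m := FreeAlgebra.ι k (Gen.sig s)
def E {m : ℕ} (i : Fin m → kˣ) : FA k m := FreeAlgebra.ι k (Gen.idem i)
def Pg {m : ℕ} : FA k m := FreeAlgebra.ι k (Gen.pi : Gen kˣ m)

/-- `σ_k` exchanges positions `k` and `k+1`: the lower position. -/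
def lo {m : ℕ} (s : Fin (m - 1)) : Fin m := ⟨s.1, by have := s.2; omega⟩

/-- The upper position `k+1`. -/
def hi {m : ℕ} (s : Fin (m - 1)) : Fin m := ⟨s.1 + 1, by have := s.2; omega⟩

/-- The action of the simple transposition `s_k` on sequences. -/
def swapAt {V : Type} {m : ℕ} (s : Fin (m - 1)) (i : Fin m → V) : Fin m → V :=
  i ∘ Equiv.swap (lo s) (hi s)

/-- The defining relations of the VV algebra (when `withPi = true`) and of the KLR algebra
(when `withPi = false`), for the quiver with arrows `p² i → i`, parameter `q`, sequences
satisfying `P` (whose collection is the finite set `T`). -/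
inductive Rel (p q : kˣ) {m : ℕ} (P : (Fin m → kˣ) → Prop) (T : Finset (Fin m → kˣ))
    (withPi : Bool) : FA k m → FA k m → Prop
  -- the e(i) are orthogonal idempotents summing to 1
  | idem_mul (i : Fin m → kˣ) : Rel p q P T withPi (E i * E i) (E i)
  | idem_orth (i j : Fin m → kˣ) (h : i ≠ j) : Rel p q P T withPi (E i * E j) 0
  | idem_zero (i : Fin m → kˣ) (h : ¬ P i) : Rel p q P T withPi (E i) 0
  | idem_sum : Rel p q P T withPi (∑ i ∈ T, E i) 1
  -- the x's commute with each other and with the idempotents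
  | x_mul_comm (a b : Fin m) : Rel p q P T withPi (X a * X b) (X b * X a)
  | x_idem (a : Fin m) (i : Fin m → kˣ) : Rel p q P T withPi (X a * E i) (E i * X a)
  -- σ_k e(i) = e(s_k i) σ_k
  | sig_idem (s : Fin (m - 1)) (i : Fin m → kˣ) :
      Rel p q P T withPi (Sg s * E i) (E (swapAt s i) * Sg s)
  -- quadratic relations for σ_k
  | sig_sq_eq (s : Fin (m - 1)) (i : Fin m → kˣ) (h : i (lo s) = i (hi s)) :
      Rel p q P T withPi (Sg s * Sg s * E i) 0
  | sig_sq_none (s : Fin (m - 1)) (i : Fin m → kˣ) (hne : i (lo s) ≠ i (hi s))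
      (h1 : ¬ Arrow p (i (lo s)) (i (hi s))) (h2 : ¬ Arrow p (i (hi s)) (i (lo s))) :
      Rel p q P T withPi (Sg s * Sg s * E i) (E i)
  | sig_sq_from (s : Fin (m - 1)) (i : Fin m → kˣ)
      (h1 : Arrow p (i (hi s)) (i (lo s))) (h2 : ¬ Arrow p (i (lo s)) (i (hi s))) :
      Rel p q P T withPi (Sg s * Sg s * E i) ((X (hi s) - X (lo s)) * E i)
  | sig_sq_to (s : Fin (m - 1)) (i : Fin m → kˣ)
      (h1 : Arrow p (i (lo s)) (i (hi s))) (h2 : ¬ Arrow p (i (hi s)) (i (lo s))) :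
      Rel p q P T withPi (Sg s * Sg s * E i) ((X (lo s) - X (hi s)) * E i)
  | sig_sq_both (s : Fin (m - 1)) (i : Fin m → kˣ)
      (h1 : Arrow p (i (lo s)) (i (hi s))) (h2 : Arrow p (i (hi s)) (i (lo s))) :
      Rel p q P T withPi (Sg s * Sg s * E i) ((X (hi s) - X (lo s)) * (X (lo s) - X (hi s)) * E i)
  -- far-apart σ's commute
  | sig_comm (s t : Fin (m - 1)) (h : s.1 + 1 < t.1) :
      Rel p q P T withPi (Sg s * Sg t) (Sg t * Sg s)
  -- braid relations
  | braid_triv (s : Fin (m - 1)) (hs : s.1 + 1 < m - 1) (i : Fin m → kˣ)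
      (h : i (lo s) ≠ i ⟨s.1 + 2, by omega⟩ ∨
        (¬ Arrow p (i (lo s)) (i (hi s)) ∧ ¬ Arrow p (i (hi s)) (i (lo s)))) :
      Rel p q P T withPi (Sg ⟨s.1 + 1, hs⟩ * Sg s * Sg ⟨s.1 + 1, hs⟩ * E i)
        (Sg s * Sg ⟨s.1 + 1, hs⟩ * Sg s * E i)
  | braid_to (s : Fin (m - 1)) (hs : s.1 + 1 < m - 1) (i : Fin m → kˣ)
      (he : i (lo s) = i ⟨s.1 + 2, by omega⟩)
      (h1 : Arrow p (i (lo s)) (i (hi s))) (h2 : ¬ Arrow p (i (hi s)) (i (lo s))) :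
      Rel p q P T withPi (Sg ⟨s.1 + 1, hs⟩ * Sg s * Sg ⟨s.1 + 1, hs⟩ * E i)
        (Sg s * Sg ⟨s.1 + 1, hs⟩ * Sg s * E i + E i)
  | braid_from (s : Fin (m - 1)) (hs : s.1 + 1 < m - 1) (i : Fin m → kˣ)
      (he : i (lo s) = i ⟨s.1 + 2, by omega⟩)
      (h1 : Arrow p (i (hi s)) (i (lo s))) (h2 : ¬ Arrow p (i (lo s)) (i (hi s))) :
      Rel p q P T withPi (Sg ⟨s.1 + 1, hs⟩ * Sg s * Sg ⟨s.1 + 1, hs⟩ * E i)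
        (Sg s * Sg ⟨s.1 + 1, hs⟩ * Sg s * E i - E i)
  | braid_both (s : Fin (m - 1)) (hs : s.1 + 1 < m - 1) (i : Fin m → kˣ)
      (he : i (lo s) = i ⟨s.1 + 2, by omega⟩)
      (h1 : Arrow p (i (lo s)) (i (hi s))) (h2 : Arrow p (i (hi s)) (i (lo s))) :
      Rel p q P T withPi (Sg ⟨s.1 + 1, hs⟩ * Sg s * Sg ⟨s.1 + 1, hs⟩ * E i)
        (Sg s * Sg ⟨s.1 + 1, hs⟩ * Sg s * E i +
          ((2 : FA k m) * X (hi s) - X ⟨s.1 + 2, by omega⟩ - X (lo s)) * E i)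
  -- mixed relations for σ and x
  | sig_x_lo (s : Fin (m - 1)) (i : Fin m → kˣ) (h : i (lo s) = i (hi s)) :
      Rel p q P T withPi (Sg s * X (lo s) * E i) (X (hi s) * Sg s * E i - E i)
  | sig_x_hi (s : Fin (m - 1)) (i : Fin m → kˣ) (h : i (lo s) = i (hi s)) :
      Rel p q P T withPi (Sg s * X (hi s) * E i) (X (lo s) * Sg s * E i + E i)
  | sig_x (s : Fin (m - 1)) (l : Fin m) (i : Fin m → kˣ)
      (h : i (lo s) ≠ i (hi s) ∨ (l ≠ lo s ∧ l ≠ hi s)) :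
      Rel p q P T withPi (Sg s * X l * E i) (X (Equiv.swap (lo s) (hi s) l) * Sg s * E i)
  -- relations involving π (only for the VV algebra)
  | pi_idem (hw : withPi = true) (h0 : 0 < m) (i : Fin m → kˣ) :
      Rel p q P T withPi (Pg * E i) (E (Function.update i ⟨0, h0⟩ (i ⟨0, h0⟩)⁻¹) * Pg)
  | pi_sq_q (hw : withPi = true) (h0 : 0 < m) (i : Fin m → kˣ) (h : i ⟨0, h0⟩ = q) :
      Rel p q P T withPi (Pg * Pg * E i) (X ⟨0, h0⟩ * E i)
  | pi_sq_qinv (hw : withPi = true) (h0 : 0 < m) (i : Fin m → kˣ) (h : i ⟨0, h0⟩ = q⁻¹) :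
      Rel p q P T withPi (Pg * Pg * E i) (-(X ⟨0, h0⟩ * E i))
  | pi_sq_one (hw : withPi = true) (h0 : 0 < m) (i : Fin m → kˣ)
      (h1 : i ⟨0, h0⟩ ≠ q) (h2 : i ⟨0, h0⟩ ≠ q⁻¹) :
      Rel p q P T withPi (Pg * Pg * E i) (E i)
  | pi_x_zero (hw : withPi = true) (h0 : 0 < m) :
      Rel p q P T withPi (Pg * X ⟨0, h0⟩) (-(X ⟨0, h0⟩ * Pg))
  | pi_x (hw : withPi = true) (l : Fin m) (h : 0 < l.1) :
      Rel p q P T withPi (Pg * X l) (X l * Pg)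
  | pi_sig (hw : withPi = true) (s : Fin (m - 1)) (h : 0 < s.1) :
      Rel p q P T withPi (Pg * Sg s) (Sg s * Pg)
  | sig_pi_plus (hw : withPi = true) (h1 : 0 < m - 1) (i : Fin m → kˣ)
      (ha : i ⟨0, by omega⟩ = q) (hb : i ⟨1, by omega⟩ = q⁻¹) :
      Rel p q P T withPi (Sg ⟨0, h1⟩ * Pg * (Sg ⟨0, h1⟩ * Pg) * E i)
        (Pg * Sg ⟨0, h1⟩ * (Pg * Sg ⟨0, h1⟩) * E i + Sg ⟨0, h1⟩ * E i)
  | sig_pi_minus (hw : withPi = true) (h1 : 0 < m - 1) (i : Fin m → kˣ)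
      (ha : i ⟨0, by omega⟩ = q⁻¹) (hb : i ⟨1, by omega⟩ = q) :
      Rel p q P T withPi (Sg ⟨0, h1⟩ * Pg * (Sg ⟨0, h1⟩ * Pg) * E i)
        (Pg * Sg ⟨0, h1⟩ * (Pg * Sg ⟨0, h1⟩) * E i - Sg ⟨0, h1⟩ * E i)
  | sig_pi_zero (hw : withPi = true) (h1 : 0 < m - 1) (i : Fin m → kˣ)
      (hc : ¬ (i ⟨0, by omega⟩ = q ∧ i ⟨1, by omega⟩ = q⁻¹))
      (hc' : ¬ (i ⟨0, by omega⟩ = q⁻¹ ∧ i ⟨1, by omega⟩ = q)) :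
      Rel p q P T withPi (Sg ⟨0, h1⟩ * Pg * (Sg ⟨0, h1⟩ * Pg) * E i)
        (Pg * Sg ⟨0, h1⟩ * (Pg * Sg ⟨0, h1⟩) * E i)
  -- for the KLR algebra, there is no generator π
  | pi_zero (hw : withPi = false) : Rel p q P T withPi Pg 0

/-- The VV algebra `𝔚_ν` attached to `p`, `q` and a dimension vector `ν` of height `2m`. -/
@[reducible] def VV (k : Type) [Field k] (p q : kˣ) (ν : kˣ →₀ ℕ) (m : ℕ) : Type :=
  RingQuot (Rel p q (IsThetaSeq ν) (thetaSeqs ν m) true)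

/-- The KLR algebra `R_ν̃` attached to `p` and a dimension vector `ν̃` of height `m`. -/
@[reducible] def KLR (k : Type) [Field k] (p : kˣ) (ν : kˣ →₀ ℕ) (m : ℕ) : Type :=
  RingQuot (Rel p 1 (IsSeq ν) (seqs ν m) false)

/-- The canonical map from the free algebra onto the VV algebra. -/
def vmk (p q : kˣ) (ν : kˣ →₀ ℕ) (m : ℕ) : FA k m →ₐ[k] VV k p q ν m :=
  RingQuot.mkAlgHom k _

/-- The canonical map from the free algebra onto the KLR algebra. -/
def kmk (p : kˣ) (ν : kˣ →₀ ℕ) (m : ℕ) : FA k m →ₐ[k] KLR k p ν m :=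
  RingQuot.mkAlgHom k _

/-- Two `k`-algebras are Morita equivalent if there is a `k`-linear equivalence between their
categories of (left) modules. -/
def MoritaEquiv (k : Type) [Field k] (A B : Type) [Ring A] [Ring B]
    [Algebra k A] [Algebra k B] : Prop :=
  ∃ (e : ModuleCat.{0} A ≌ ModuleCat.{0} B) (_ : e.functor.Additive), e.functor.Linear k

end VVPaper

/-!
The relation `σ_k² e(i) = e(i)`, valid when `i_k ≠ i_{k+1}` are not joined by an arrow, gives
`e(i) = σ_k e(s_k i) σ_k`. Since the orbit `I` is stable under `x ↦ p^{±2} x`, no arrow joins an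
entry of `I` to one outside `I`, so adjacent entries (not in `I`, in `I`) can be exchanged without
leaving the ideal generated by `e`. Bubble-sorting the `I`-entries to the front turns every `e(i)`
in `1 = Σ e(i)` into a two-sided multiple of some `e(i')` with `i'` sorted. Comparing the parts of
`Σ i'_l + Σ i'_l⁻¹` supported on `I` and off `I` (using `θ(I) = I`), and counting heights, shows
`i' = a b` with `a ∈ ᶿI^{ν₁}` and `b ∈ ᶿJ^{ν₂}`, whence `e(i') = e · e(i')`.
-/

namespace VVPaper

open Finset

section Sorting

variable {α : Type} {n : ℕ}

lemma antitone_of_forall_hi_imp_lo {f : Fin n → Prop}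
    (h : ∀ s : Fin (n - 1), f (hi s) → f (lo s)) : Antitone f := by
  rintro a ⟨b, hb⟩ hab
  induction b, (show a.1 ≤ b from hab) using Nat.le_induction with
  | base => exact le_rfl
  | succ b hab' ih => exact le_trans (h ⟨b, by omega⟩) (ih (by omega) hab')

lemma _root_.Antitone.fin_iff_lt_card {f : Fin n → Prop} [DecidablePred f] (hf : Antitone f)
    (l : Fin n) : f l ↔ l.1 < #{l | f l} := by
  constructor
  · intro hl
    have hsub : Iic l ⊆ ({l | f l} : Finset (Fin n)) := fun x hx =>
      mem_filter.2 ⟨mem_univ x, hf (mem_Iic.1 hx) hl⟩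
    have := card_le_card hsub
    rw [Fin.card_Iic] at this
    omega
  · intro hl
    by_contra hnl
    have hsub : ({l | f l} : Finset (Fin n)) ⊆ Iio l := fun x hx =>
      mem_Iio.2 (lt_of_not_ge fun hlx => hnl (hf hlx (mem_filter.1 hx).2))
    have := card_le_card hsub
    rw [Fin.card_Iio] at this
    omega

lemma sum_ite_swapAt_lt (good : α → Prop) [DecidablePred good] (i : Fin n → α) (s : Fin (n - 1))
    (hlo : ¬ good (i (lo s))) (hhi : good (i (hi s))) :
    ∑ l, (if good (swapAt s i l) then l.1 else 0) < ∑ l, (if good (i l) then l.1 else 0) := by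
  rw [← Equiv.sum_comp (Equiv.swap (lo s) (hi s))]
  simp only [swapAt, Function.comp_apply, Equiv.swap_apply_self]
  refine sum_lt_sum (fun l _ => ?_) ⟨hi s, mem_univ _, ?_⟩
  · split_ifs with hl
    · rcases eq_or_ne l (lo s) with rfl | hl1
      · exact absurd hl hlo
      rcases eq_or_ne l (hi s) with rfl | hl2
      · simp [lo, hi]
      · rw [Equiv.swap_apply_of_ne_of_ne hl1 hl2]
    · exact le_rfl
  · rw [Equiv.swap_apply_right, if_pos hhi, if_pos hhi]
    exact Nat.lt_succ_self _

theorem forall_of_antitone_of_swapAt (good : α → Prop) {P : (Fin n → α) → Prop}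
    (sorted : ∀ i, Antitone (fun l => good (i l)) → P i)
    (swap : ∀ i s, ¬ good (i (lo s)) → good (i (hi s)) → P (swapAt s i) → P i)
    (i : Fin n → α) : P i := by
  classical
  induction h : ∑ l, (if good (i l) then l.1 else 0) using Nat.strong_induction_on generalizing i
    with | _ N ih =>
  by_cases hdesc : ∃ s, ¬ good (i (lo s)) ∧ good (i (hi s))
  · obtain ⟨s, hlo, hhi⟩ := hdesc
    exact swap i s hlo hhi (ih _ (h ▸ sum_ite_swapAt_lt good i s hlo hhi) _ rfl)
  · push Not at hdesc
    exact sorted i (antitone_of_forall_hi_imp_lo fun s hs => not_not.1 fun h => hdesc s h hs)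

end Sorting

variable {k : Type} [Field k]

section Orbit

variable {p lam x : kˣ}

lemma inv_mem_orbit (h : x ∈ orbit p lam) : x⁻¹ ∈ orbit p lam := by
  obtain ⟨n, h | h⟩ := h <;> refine ⟨-n, ?_⟩
  · exact Or.inr (by rw [h, mul_inv, ← zpow_neg, neg_mul_eq_mul_neg])
  · exact Or.inl (by rw [h, mul_inv, inv_inv, ← zpow_neg, neg_mul_eq_mul_neg])

lemma zpow_mul_mem_orbit (n : ℤ) (h : x ∈ orbit p lam) : p ^ (2 * n) * x ∈ orbit p lam := by
  obtain ⟨l, h | h⟩ := h <;> refine ⟨n + l, ?_⟩ <;> simp [h, mul_add, zpow_add, mul_assoc]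

lemma Arrow.mem_orbit_iff {a b : kˣ} (h : Arrow p a b) : a ∈ orbit p lam ↔ b ∈ orbit p lam := by
  rw [h]
  refine ⟨fun ha => ?_, fun hb => by simpa using zpow_mul_mem_orbit 1 hb⟩
  have := zpow_mul_mem_orbit (-1) ha
  rwa [← mul_assoc, ← zpow_natCast, ← zpow_add, show 2 * (-1 : ℤ) + (2 : ℕ) = 0 by norm_num,
    zpow_zero, one_mul] at this

end Orbit

section ThetaSequences

-- `IsThetaSeq ν i` unfolds to `∑ l, thetaPair (i l) = ν`.
def thetaPair (x : kˣ) : kˣ →₀ ℕ := Finsupp.single x 1 + Finsupp.single x⁻¹ 1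

lemma height_sum {ι : Type} (s : Finset ι) (g : ι → kˣ →₀ ℕ) :
    height (∑ i ∈ s, g i) = ∑ i ∈ s, height (g i) :=
  (Finsupp.sum_finsetSum_index (fun _ => rfl) (fun _ _ _ => rfl)).symm

lemma height_thetaPair (x : kˣ) : height (thetaPair x) = 2 := by
  simp [height, thetaPair, Finsupp.sum_add_index']

variable {I : Set kˣ} [DecidablePred (· ∈ I)]

lemma filter_thetaPair (hI : ∀ x ∈ I, x⁻¹ ∈ I) (x : kˣ) :
    (thetaPair x).filter (· ∈ I) = if x ∈ I then thetaPair x else 0 := by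
  have hinv : x⁻¹ ∈ I ↔ x ∈ I := ⟨fun h => inv_inv x ▸ hI _ h, hI x⟩
  split_ifs with hx <;> simp [thetaPair, hx, hinv]

variable {ν ν₁ ν₂ : kˣ →₀ ℕ} {m : ℕ}

lemma sum_ite_thetaPair_eq (hI : ∀ x ∈ I, x⁻¹ ∈ I) (hν₁ : ∀ a, ν₁ a ≠ 0 → a ∈ I)
    (hν₂ : ∀ a, ν₂ a ≠ 0 → a ∉ I) {i : Fin m → kˣ} (h : IsThetaSeq (ν₁ + ν₂) i) :
    ∑ l, (if i l ∈ I then thetaPair (i l) else 0) = ν₁ := by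
  have := congrArg (Finsupp.filter (· ∈ I)) h
  rw [Finsupp.filter_sum, Finsupp.filter_add, (Finsupp.filter_eq_self_iff _ _).2 hν₁,
    (Finsupp.filter_eq_zero_iff _ _).2 fun x hx => by_contra fun h0 => hν₂ x h0 hx,
    add_zero] at this
  change ∑ l, (thetaPair (i l)).filter (· ∈ I) = ν₁ at this
  simpa only [filter_thetaPair hI] using this

lemma card_filter_mem_eq (hI : ∀ x ∈ I, x⁻¹ ∈ I) (hν₁ : ∀ a, ν₁ a ≠ 0 → a ∈ I)
    (hν₂ : ∀ a, ν₂ a ≠ 0 → a ∉ I) {m₁ : ℕ} (hm₁ : height ν₁ = 2 * m₁) {i : Fin m → kˣ}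
    (h : IsThetaSeq (ν₁ + ν₂) i) : #{l | i l ∈ I} = m₁ := by
  have := congrArg height (sum_ite_thetaPair_eq hI hν₁ hν₂ h)
  simp only [height_sum, apply_ite height, height_thetaPair, hm₁] at this
  rw [show height (0 : kˣ →₀ ℕ) = 0 from Finsupp.sum_zero_index, sum_ite, sum_const,
    sum_const_zero, smul_eq_mul, add_zero] at this
  omega

lemma isThetaSeq_castAdd_natAdd_of_antitone (hI : ∀ x ∈ I, x⁻¹ ∈ I)
    (hν₁ : ∀ a, ν₁ a ≠ 0 → a ∈ I) (hν₂ : ∀ a, ν₂ a ≠ 0 → a ∉ I) {m₁ m₂ : ℕ}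
    (hm₁ : height ν₁ = 2 * m₁) {i : Fin (m₁ + m₂) → kˣ} (h : IsThetaSeq (ν₁ + ν₂) i)
    (hsorted : Antitone fun l => i l ∈ I) :
    IsThetaSeq ν₁ (fun j => i (Fin.castAdd m₂ j)) ∧
      IsThetaSeq ν₂ (fun j => i (Fin.natAdd m₁ j)) := by
  have hmem : ∀ l, i l ∈ I ↔ l.1 < m₁ := fun l => by
    rw [hsorted.fin_iff_lt_card, card_filter_mem_eq hI hν₁ hν₂ hm₁ h]
  have h₁ : ∑ j, thetaPair (i (Fin.castAdd m₂ j)) = ν₁ := by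
    rw [← sum_ite_thetaPair_eq hI hν₁ hν₂ h, Fin.sum_univ_add]
    simp [hmem]
  refine ⟨h₁, add_left_cancel (?_ : ν₁ + _ = ν₁ + ν₂)⟩
  rw [← h, ← h₁]
  exact (Fin.sum_univ_add fun l => thetaPair (i l)).symm

lemma mem_thetaSeqs_iff {i : Fin m → kˣ} : i ∈ thetaSeqs ν m ↔ IsThetaSeq ν i := by
  classical
  refine ⟨fun hi => (mem_filter.1 hi).2, fun h => mem_filter.2 ⟨?_, h⟩⟩
  refine Fintype.mem_piFinset.2 fun j => Finsupp.mem_support_iff.2 ?_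
  rw [← h, Finsupp.finsetSum_apply]
  exact (sum_pos' (fun _ _ => Nat.zero_le _)
    ⟨j, mem_univ j, by simp [Finsupp.single_apply]⟩).ne'

lemma isThetaSeq_swapAt {i : Fin m → kˣ} (s : Fin (m - 1)) (h : IsThetaSeq ν i) :
    IsThetaSeq ν (swapAt s i) :=
  (Equiv.sum_comp (Equiv.swap (lo s) (hi s)) fun l => thetaPair (i l)).trans h

end ThetaSequences

section Algebra

variable {p q : kˣ} {ν : kˣ →₀ ℕ} {m : ℕ}

lemma one_eq_sum_vmk_E : (1 : VV k p q ν m) = ∑ i ∈ thetaSeqs ν m, vmk p q ν m (E i) := by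
  rw [← map_sum, ← map_one (vmk p q ν m)]
  exact (RingQuot.mkAlgHom_rel k Rel.idem_sum).symm

open Classical in
lemma vmk_E_mul_vmk_E (i j : Fin m → kˣ) :
    vmk p q ν m (E i) * vmk p q ν m (E j) = if i = j then vmk p q ν m (E i) else 0 := by
  rw [← map_mul]
  split_ifs with h
  · subst h
    exact RingQuot.mkAlgHom_rel k (Rel.idem_mul i)
  · rw [← map_zero (vmk p q ν m)]
    exact RingQuot.mkAlgHom_rel k (Rel.idem_orth i j h)

lemma sum_vmk_E_append_mul {m₁ m₂ : ℕ} (S₁ : Finset (Fin m₁ → kˣ)) (S₂ : Finset (Fin m₂ → kˣ))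
    {a : Fin m₁ → kˣ} {b : Fin m₂ → kˣ} (ha : a ∈ S₁) (hb : b ∈ S₂) :
    (∑ i ∈ S₁, ∑ j ∈ S₂, vmk p q ν (m₁ + m₂) (E (Fin.append i j))) *
      vmk p q ν (m₁ + m₂) (E (Fin.append a b)) = vmk p q ν (m₁ + m₂) (E (Fin.append a b)) := by
  have happend : ∀ x : (Fin m₁ → kˣ) × (Fin m₂ → kˣ),
      Fin.append x.1 x.2 = Fin.append a b → x = (a, b) :=
    fun x => (Fin.appendEquiv m₁ m₂).injective (a₁ := x) (a₂ := (a, b))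
  rw [← sum_product', sum_mul, sum_eq_single_of_mem (a, b) (mem_product.2 ⟨ha, hb⟩)]
  · rw [vmk_E_mul_vmk_E, if_pos rfl]
  · intro x _ hx
    rw [vmk_E_mul_vmk_E, if_neg (mt (happend x) hx)]

lemma vmk_E_eq_sig_mul_swapAt_mul_sig (i : Fin m → kˣ) (s : Fin (m - 1))
    (hne : i (lo s) ≠ i (hi s)) (h₁ : ¬ Arrow p (i (lo s)) (i (hi s)))
    (h₂ : ¬ Arrow p (i (hi s)) (i (lo s))) :
    vmk p q ν m (E i) =
      vmk p q ν m (Sg s) * vmk p q ν m (E (swapAt s i)) * vmk p q ν m (Sg s) := by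
  have hsq : vmk p q ν m (Sg s * Sg s * E i) = vmk p q ν m (E i) :=
    RingQuot.mkAlgHom_rel k (Rel.sig_sq_none s i hne h₁ h₂)
  have hcomm : vmk p q ν m (Sg s * E i) = vmk p q ν m (E (swapAt s i) * Sg s) :=
    RingQuot.mkAlgHom_rel k (Rel.sig_idem s i)
  rw [← hsq, mul_assoc, map_mul, hcomm, map_mul, mul_assoc]

lemma vmk_E_mem_of_vmk_E_swapAt_mem {lam : kˣ} {i : Fin m → kˣ} {s : Fin (m - 1)}
    (hlo : i (lo s) ∉ orbit p lam) (hhi : i (hi s) ∈ orbit p lam)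
    {T : TwoSidedIdeal (VV k p q ν m)} (h : vmk p q ν m (E (swapAt s i)) ∈ T) :
    vmk p q ν m (E i) ∈ T := by
  rw [vmk_E_eq_sig_mul_swapAt_mul_sig i s (fun h => hlo (h ▸ hhi))
    (fun h => hlo (h.mem_orbit_iff.2 hhi)) (fun h => hlo (h.mem_orbit_iff.1 hhi))]
  exact T.mul_mem_right _ _ (T.mul_mem_left _ _ h)

end Algebra

theorem separated_idempotent_full_general
    (k : Type) [Field k]
    (p q : kˣ)
    (I J : Set kˣ) (hI : ∃ lam : kˣ, I = orbit p lam)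
    (hdisj : I ∩ J = ∅)
    (ν₁ ν₂ : kˣ →₀ ℕ) (hν₁ : IsDimVec I ν₁) (hν₂ : IsDimVec J ν₂)
    (m₁ m₂ : ℕ) (hm₁ : height ν₁ = 2 * m₁)
    (e : VV k p q (ν₁ + ν₂) (m₁ + m₂))
    (he : e = ∑ i ∈ thetaSeqs ν₁ m₁, ∑ j ∈ thetaSeqs ν₂ m₂,
      vmk p q (ν₁ + ν₂) (m₁ + m₂) (E (Fin.append i j))) :
    TwoSidedIdeal.span {e} = (⊤ : TwoSidedIdeal (VV k p q (ν₁ + ν₂) (m₁ + m₂))) := by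
  classical
  obtain ⟨lam, rfl⟩ := hI
  have hν₂I : ∀ a, ν₂ a ≠ 0 → a ∉ orbit p lam := fun a ha haI =>
    Set.eq_empty_iff_forall_notMem.1 hdisj a ⟨haI, hν₂.1 a ha⟩
  refine (TwoSidedIdeal.one_mem_iff _).1 ?_
  rw [one_eq_sum_vmk_E]
  refine sum_mem fun i hi => ?_
  refine forall_of_antitone_of_swapAt (· ∈ orbit p lam)
    (P := fun i => IsThetaSeq (ν₁ + ν₂) i → vmk p q _ _ (E i) ∈ TwoSidedIdeal.span {e})
    (fun i hsorted hi => ?_)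
    (fun i s hlo hhi ih hi => vmk_E_mem_of_vmk_E_swapAt_mem hlo hhi (ih (isThetaSeq_swapAt s hi)))
    i (mem_thetaSeqs_iff.1 hi)
  obtain ⟨ha, hb⟩ :=
    isThetaSeq_castAdd_natAdd_of_antitone (fun _ => inv_mem_orbit) hν₁.1 hν₂I hm₁ hi hsorted
  rw [← Fin.append_castAdd_natAdd (f := i), ← sum_vmk_E_append_mul _ _ (mem_thetaSeqs_iff.2 ha)
    (mem_thetaSeqs_iff.2 hb), ← he]
  exact TwoSidedIdeal.mul_mem_right _ _ _ (TwoSidedIdeal.subset_span rfl)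

/-- Lemma 2.5.  For two disjoint orbits `I, J` and `ν = ν₁ + ν₂`, the
idempotent `e = Σ_{i ∈ ᶿI^{ν₁}, j ∈ ᶿJ^{ν₂}} e(ij)` is full in the separated VV algebra
`𝔚_ν`, i.e. `𝔚_ν e 𝔚_ν = 𝔚_ν`. -/
theorem separated_idempotent_full
    (k : Type) [Field k] (hchar : (2 : k) ≠ 0)
    (p q : kˣ) (hp1 : p ≠ 1) (hp2 : p ≠ -1)
    (hpq : ∀ n : ℤ, p ≠ q ^ n) (hqp : ∀ n : ℤ, q ≠ p ^ n)
    (I J : Set kˣ) (hI : ∃ lam : kˣ, I = orbit p lam) (hJ : ∃ mu : kˣ, J = orbit p mu)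
    (hdisj : I ∩ J = ∅)
    (hI1 : (1 : kˣ) ∉ I) (hI1' : (-1 : kˣ) ∉ I)
    (hJ1 : (1 : kˣ) ∉ J) (hJ1' : (-1 : kˣ) ∉ J)
    (ν₁ ν₂ : kˣ →₀ ℕ) (hν₁ : IsDimVec I ν₁) (hν₂ : IsDimVec J ν₂)
    (m₁ m₂ : ℕ) (hm₁ : height ν₁ = 2 * m₁) (hm₂ : height ν₂ = 2 * m₂)
    (e : VV k p q (ν₁ + ν₂) (m₁ + m₂))
    (he : e = ∑ i ∈ thetaSeqs ν₁ m₁, ∑ j ∈ thetaSeqs ν₂ m₂,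
      vmk p q (ν₁ + ν₂) (m₁ + m₂) (E (Fin.append i j))) :
    TwoSidedIdeal.span {e} = (⊤ : TwoSidedIdeal (VV k p q (ν₁ + ν₂) (m₁ + m₂))) :=
  separated_idempotent_full_general k p q I J hI hdisj ν₁ ν₂ hν₁ hν₂ m₁ m₂ hm₁ e he

end VVPaper
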